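/- Let g be a generator satisfying (H1)(i) with a one-sided Osgood function ρ of linear growth, i.e. ρ(x)≤A(x+1) for all x≥0 for some constant A>0, and satisfying (H2')(ii) with data f, μ, λ, α (resp. (H2)(ii) with data γ, f, α). Let (X̲,Y,X̄,Z)∈S×S×S×M satisfy X̲_t≤Y_t≤X̄_t for all t∈[0,T]. Then dP×dt-almost everywhere, |g(t,Y_t,Z_t)| ≤ |g(t,X̲_t,0)|+|g(t,X̄_t,0)|+(μ+A)(|X̲_t|+|X̄_t|)+f_t+A+λ|Z_t|^α (resp. |g(t,Y_t,Z_t)| ≤ |g(t,X̲_t,0)|+|g(t,X̄_t,0)|+(γ+A)(|X̲_t|+|X̄_t|)+γ(1+f_t)+A+γ|Z_t|^α). -/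

import Mathlib

/-!
Common framework for L¹ solutions of (reflected) BSDEs, following
S. Fan, "L¹ solutions of non-reflected BSDEs and reflected BSDEs with one and
two continuous barriers under general assumptions".

We fix a filtered probability space `(Ω, m, P; (F t))` over the time interval `[0, T]`.
Since Mathlib does not provide a stochastic (Itô) integral, the stochastic integral
against the underlying Brownian motion is modelled by an abstract operator
`SI : (ℝ → Ω → Rd d) → ℝ → Ω → ℝ`, where `SI Z t ω` stands for `∫_0^t Z_s · dB_s (ω)`.
-/

open MeasureTheory Set Filter
open scoped ENNReal NNReal Topology Classical

noncomputable section

namespace L1BSDE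

variable {Ω : Type*} {m : MeasurableSpace Ω}

/-- `ℝ^d` with the Euclidean norm. -/
abbrev Rd (d : ℕ) := EuclideanSpace ℝ (Fin d)

/-- The property `Q` holds `dP × dt`-almost everywhere on `Ω × [0,T]`. -/
def AEAE (P : Measure Ω) (T : ℝ) (Q : ℝ → Ω → Prop) : Prop :=
  ∀ᵐ ω ∂P, ∀ᵐ t ∂(volume.restrict (Icc (0:ℝ) T)), Q t ω

/-- The space `S` of continuous progressively measurable real processes. -/
def MemS (F : Filtration ℝ m) (T : ℝ) (Y : ℝ → Ω → ℝ) : Prop :=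
  ProgMeasurable F Y ∧ ∀ ω, ContinuousOn (fun t => Y t ω) (Icc 0 T)

/-- `sup_{t ∈ [0,T]} |Y t ω|`. -/
def supNorm (T : ℝ) (Y : ℝ → Ω → ℝ) (ω : Ω) : ℝ :=
  ⨆ t : Icc (0:ℝ) T, |Y t.1 ω|

/-- The space `S^p`. -/
def MemSp (F : Filtration ℝ m) (T : ℝ) (P : Measure Ω) (p : ℝ) (Y : ℝ → Ω → ℝ) : Prop :=
  MemS F T Y ∧ Integrable (fun ω => supNorm T Y ω ^ p) P

/-- `E[sup_{t∈[0,T]} |Y_t - Y'_t|^p]`, i.e. `‖Y - Y'‖_{S^p}^{p∨1}` for `p ≤ 1`. -/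
def SpDist (T : ℝ) (P : Measure Ω) (p : ℝ) (Y Y' : ℝ → Ω → ℝ) : ℝ :=
  ∫ ω, supNorm T (fun t ω' => Y t ω' - Y' t ω') ω ^ p ∂P

/-- The space `M` of progressively measurable `ℝ^d`-valued processes which are a.s.
square integrable in time. -/
def MemM {d : ℕ} (F : Filtration ℝ m) (T : ℝ) (P : Measure Ω) (Z : ℝ → Ω → Rd d) : Prop :=
  ProgMeasurable F Z ∧ ∀ᵐ ω ∂P, IntegrableOn (fun t => ‖Z t ω‖ ^ 2) (Icc 0 T) volume

/-- The space `M^p`. -/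
def MemMp {d : ℕ} (F : Filtration ℝ m) (T : ℝ) (P : Measure Ω) (p : ℝ)
    (Z : ℝ → Ω → Rd d) : Prop :=
  MemM F T P Z ∧ Integrable (fun ω => (∫ t in Icc (0:ℝ) T, ‖Z t ω‖ ^ 2) ^ (p / 2)) P

/-- `E[(∫_0^T |Z_t - Z'_t|^2 dt)^{p/2}]`. -/
def MpDist {d : ℕ} (T : ℝ) (P : Measure Ω) (p : ℝ) (Z Z' : ℝ → Ω → Rd d) : ℝ :=
  ∫ ω, (∫ t in Icc (0:ℝ) T, ‖Z t ω - Z' t ω‖ ^ 2) ^ (p / 2) ∂P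

/-- The space `H`: progressively measurable real processes, a.s. integrable in time. -/
def MemH (F : Filtration ℝ m) (T : ℝ) (P : Measure Ω) (X : ℝ → Ω → ℝ) : Prop :=
  ProgMeasurable F X ∧ ∀ᵐ ω ∂P, IntegrableOn (fun t => |X t ω|) (Icc 0 T) volume

/-- The space `H^1`. -/
def MemH1 (F : Filtration ℝ m) (T : ℝ) (P : Measure Ω) (X : ℝ → Ω → ℝ) : Prop :=
  MemH F T P X ∧ Integrable (fun ω => ∫ t in Icc (0:ℝ) T, |X t ω|) P

/-- Total variation of a path on `[0, t]`. -/
def totalVarOn (V : ℝ → ℝ) (t : ℝ) : ℝ :=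
  (eVariationOn V (Icc 0 t)).toReal

/-- The space `V`: continuous progressively measurable processes of finite variation. -/
def MemV (F : Filtration ℝ m) (T : ℝ) (V : ℝ → Ω → ℝ) : Prop :=
  MemS F T V ∧ ∀ ω, BoundedVariationOn (fun s => V s ω) (Icc 0 T)

/-- The space `V^1`: elements of `V` with integrable total variation. -/
def MemV1 (F : Filtration ℝ m) (T : ℝ) (P : Measure Ω) (V : ℝ → Ω → ℝ) : Prop :=
  MemV F T V ∧ Integrable (fun ω => totalVarOn (fun s => V s ω) T) P

/-- The space `V^+`: continuous increasing progressively measurable processes starting at `0`. -/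
def MemVplus (F : Filtration ℝ m) (T : ℝ) (K : ℝ → Ω → ℝ) : Prop :=
  MemS F T K ∧ (∀ ω, MonotoneOn (fun t => K t ω) (Icc 0 T)) ∧ ∀ ω, K 0 ω = 0

/-- The space `V^{+,1}`. -/
def MemVplus1 (F : Filtration ℝ m) (T : ℝ) (P : Measure Ω) (K : ℝ → Ω → ℝ) : Prop :=
  MemVplus F T K ∧ Integrable (fun ω => K T ω) P

/-- `dV¹ ≤ dV²` : the increments of `V¹` are dominated by those of `V²`, a.s. -/
def dIncrLE (T : ℝ) (P : Measure Ω) (V1 V2 : ℝ → Ω → ℝ) : Prop :=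
  ∀ᵐ ω ∂P, ∀ s ∈ Icc (0:ℝ) T, ∀ t ∈ Icc (0:ℝ) T, s ≤ t →
    V1 t ω - V1 s ω ≤ V2 t ω - V2 s ω

/-- Clamp a path to the time interval `[0,T]`. -/
def clampTo (T : ℝ) (f : ℝ → ℝ) : ℝ → ℝ := fun t => f (max 0 (min t T))

/-- The Lebesgue–Stieltjes measure `dK` associated with a continuous nondecreasing path `K`
(clamped to `[0,T]`); junk value `0` if the path is not monotone/right-continuous. -/
def pathMeasure (T : ℝ) (K : ℝ → ℝ) : Measure ℝ :=
  if h : Monotone (clampTo T K) ∧ ∀ x, ContinuousWithinAt (clampTo T K) (Ici x) x then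
    StieltjesFunction.measure ⟨clampTo T K, h.1, h.2⟩
  else 0

/-- The Stieltjes integral `∫_0^T h_t dK_t (ω)`. -/
def intdK (T : ℝ) (K : ℝ → Ω → ℝ) (h : ℝ → Ω → ℝ) (ω : Ω) : ℝ :=
  ∫ t in Icc (0:ℝ) T, h t ω ∂(pathMeasure T (fun s => K s ω))

/-- `dK ⊥ dA` : the random measures `dK` and `dA` are mutually singular, carried by a
progressively measurable set and its complement. -/
def MutSingular (F : Filtration ℝ m) (T : ℝ) (P : Measure Ω) (K A : ℝ → Ω → ℝ) : Prop :=
  ∃ D : Set (ℝ × Ω),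
    ProgMeasurable F (fun t ω => D.indicator (fun _ => (1:ℝ)) (t, ω)) ∧
    (∫ ω, intdK T K (fun t ω' => D.indicator (fun _ => (1:ℝ)) (t, ω')) ω ∂P) = 0 ∧
    (∫ ω, intdK T A (fun t ω' => Dᶜ.indicator (fun _ => (1:ℝ)) (t, ω')) ω ∂P) = 0

/-- A stopping time with values in `[0,T]`. -/
def IsStoppingTimeLE (F : Filtration ℝ m) (T : ℝ) (τ : Ω → ℝ) : Prop :=
  IsStoppingTime F (fun ω => (τ ω : WithTop ℝ)) ∧ ∀ ω, τ ω ∈ Icc (0:ℝ) T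

/-- A process of class (D): the family `{Y_τ : τ stopping time ≤ T}` is uniformly integrable. -/
def ClassD (F : Filtration ℝ m) (T : ℝ) (P : Measure Ω) (Y : ℝ → Ω → ℝ) : Prop :=
  UniformIntegrable
    (fun τ : {τ : Ω → ℝ // IsStoppingTimeLE F T τ} => fun ω => Y (τ.1 ω) ω) 1 P

/-- `ξ ∈ L^1(F_T)`. -/
def MemL1FT (F : Filtration ℝ m) (T : ℝ) (P : Measure Ω) (ξ : Ω → ℝ) : Prop :=
  StronglyMeasurable[F T] ξ ∧ Integrable ξ P

/-- A generator: progressively measurable in `(t,ω)` for each `(y,z)` and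
`dP×dt`-a.e. jointly continuous in `(y,z)`. -/
def IsGenerator {d : ℕ} (F : Filtration ℝ m) (T : ℝ) (P : Measure Ω)
    (g : ℝ → Ω → ℝ → Rd d → ℝ) : Prop :=
  (∀ y z, ProgMeasurable F (fun t ω => g t ω y z)) ∧
  AEAE P T fun t ω => Continuous fun p : ℝ × Rd d => g t ω p.1 p.2

/-- An Osgood function: nondecreasing, concave, `ρ(0)=0`, positive on `(0,∞)`,
and `∫_{0^+} du/ρ(u) = +∞`. -/
def OsgoodFun (ρ : ℝ → ℝ) : Prop :=
  MonotoneOn ρ (Ici 0) ∧ ConcaveOn ℝ (Ici 0) ρ ∧ ρ 0 = 0 ∧ (∀ u > (0:ℝ), 0 < ρ u) ∧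
  ∀ ε > (0:ℝ), ¬ IntegrableOn (fun u => 1 / ρ u) (Ioc 0 ε) volume

/-- Assumption (H1)(i) with a given Osgood function `ρ` (one-sided Osgood condition in `y`). -/
def H1i_with {d : ℕ} (P : Measure Ω) (T : ℝ) (g : ℝ → Ω → ℝ → Rd d → ℝ) (ρ : ℝ → ℝ) : Prop :=
  OsgoodFun ρ ∧ AEAE P T fun t ω => ∀ (y₁ y₂ : ℝ) (z : Rd d),
    (g t ω y₁ z - g t ω y₂ z) * Real.sign (y₁ - y₂) ≤ ρ |y₁ - y₂|

/-- Assumption (H1)(i). -/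
def H1i {d : ℕ} (P : Measure Ω) (T : ℝ) (g : ℝ → Ω → ℝ → Rd d → ℝ) : Prop :=
  ∃ ρ : ℝ → ℝ, H1i_with P T g ρ

/-- Assumption (H1)(ii): `g(·,0,0) ∈ H^1`. -/
def H1ii {d : ℕ} (F : Filtration ℝ m) (T : ℝ) (P : Measure Ω)
    (g : ℝ → Ω → ℝ → Rd d → ℝ) : Prop :=
  MemH1 F T P (fun t ω => g t ω 0 0)

/-- Assumption (H1)(iii): general growth of `g` in `y`. -/
def H1iii {d : ℕ} (F : Filtration ℝ m) (T : ℝ) (P : Measure Ω)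
    (g : ℝ → Ω → ℝ → Rd d → ℝ) : Prop :=
  ∀ r > (0:ℝ), MemH F T P (fun t ω => ⨆ y : {y : ℝ // |y| ≤ r}, |g t ω y.1 0 - g t ω 0 0|)

/-- Assumption (H1). -/
def H1 {d : ℕ} (F : Filtration ℝ m) (T : ℝ) (P : Measure Ω)
    (g : ℝ → Ω → ℝ → Rd d → ℝ) : Prop :=
  H1i P T g ∧ H1ii F T P g ∧ H1iii F T P g

/-- Assumption (H2)(i) with a given modulus `φ`: uniform continuity in `z`. -/
def H2i_with {d : ℕ} (P : Measure Ω) (T : ℝ) (g : ℝ → Ω → ℝ → Rd d → ℝ) (φ : ℝ → ℝ) : Prop :=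
  MonotoneOn φ (Ici 0) ∧ Continuous φ ∧ φ 0 = 0 ∧
  AEAE P T fun t ω => ∀ (y : ℝ) (z₁ z₂ : Rd d),
    |g t ω y z₁ - g t ω y z₂| ≤ φ ‖z₁ - z₂‖

/-- Assumption (H2)(i). -/
def H2i {d : ℕ} (P : Measure Ω) (T : ℝ) (g : ℝ → Ω → ℝ → Rd d → ℝ) : Prop :=
  ∃ φ : ℝ → ℝ, H2i_with P T g φ

/-- Assumption (H2)(ii) with given data `γ, α, f`: stronger sub-linear growth in `z`. -/
def H2ii_with {d : ℕ} (F : Filtration ℝ m) (T : ℝ) (P : Measure Ω)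
    (g : ℝ → Ω → ℝ → Rd d → ℝ) (γ α : ℝ) (f : ℝ → Ω → ℝ) : Prop :=
  0 ≤ γ ∧ α ∈ Ioo (0:ℝ) 1 ∧ (∀ t ω, 0 ≤ f t ω) ∧ MemH1 F T P f ∧
  AEAE P T fun t ω => ∀ (y : ℝ) (z : Rd d),
    |g t ω y z - g t ω y 0| ≤ γ * (f t ω + |y| + ‖z‖) ^ α

/-- Assumption (H2)(ii). -/
def H2ii {d : ℕ} (F : Filtration ℝ m) (T : ℝ) (P : Measure Ω)
    (g : ℝ → Ω → ℝ → Rd d → ℝ) : Prop :=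
  ∃ (γ α : ℝ) (f : ℝ → Ω → ℝ), H2ii_with F T P g γ α f

/-- Assumption (H2). -/
def H2 {d : ℕ} (F : Filtration ℝ m) (T : ℝ) (P : Measure Ω)
    (g : ℝ → Ω → ℝ → Rd d → ℝ) : Prop :=
  H2i P T g ∧ H2ii F T P g

/-- Assumption (H2')(i): `g` is continuous in `z`, and continuous in `y`
uniformly with respect to `z`. -/
def H2'i {d : ℕ} (P : Measure Ω) (T : ℝ) (g : ℝ → Ω → ℝ → Rd d → ℝ) : Prop :=
  AEAE P T fun t ω =>
    (∀ y : ℝ, Continuous fun z : Rd d => g t ω y z) ∧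
    ∀ y : ℝ, ∀ ε > (0:ℝ), ∃ δ > (0:ℝ), ∀ (y' : ℝ) (z : Rd d),
      |y' - y| < δ → |g t ω y' z - g t ω y z| < ε

/-- Assumption (H2')(ii) with given data `μ, λ, α, f`: sub-linear growth in `z`. -/
def H2'ii_with {d : ℕ} (F : Filtration ℝ m) (T : ℝ) (P : Measure Ω)
    (g : ℝ → Ω → ℝ → Rd d → ℝ) (μ lam α : ℝ) (f : ℝ → Ω → ℝ) : Prop :=
  0 ≤ μ ∧ 0 ≤ lam ∧ α ∈ Ioo (0:ℝ) 1 ∧ (∀ t ω, 0 ≤ f t ω) ∧ MemH1 F T P f ∧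
  AEAE P T fun t ω => ∀ (y : ℝ) (z : Rd d),
    |g t ω y z - g t ω y 0| ≤ f t ω + μ * |y| + lam * ‖z‖ ^ α

/-- Assumption (H2')(ii). -/
def H2'ii {d : ℕ} (F : Filtration ℝ m) (T : ℝ) (P : Measure Ω)
    (g : ℝ → Ω → ℝ → Rd d → ℝ) : Prop :=
  ∃ (μ lam α : ℝ) (f : ℝ → Ω → ℝ), H2'ii_with F T P g μ lam α f

/-- Assumption (H2'). -/
def H2' {d : ℕ} (F : Filtration ℝ m) (T : ℝ) (P : Measure Ω)
    (g : ℝ → Ω → ℝ → Rd d → ℝ) : Prop :=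
  H2'i P T g ∧ H2'ii F T P g

/-- Assumption (HH)(ii): general growth in `y` and sub-linear growth in `z`. -/
def HHii {d : ℕ} (F : Filtration ℝ m) (T : ℝ) (P : Measure Ω)
    (g : ℝ → Ω → ℝ → Rd d → ℝ) : Prop :=
  ∃ (lam α : ℝ) (f : ℝ → Ω → ℝ) (φ : ℝ → Ω → ℝ → ℝ),
    0 ≤ lam ∧ α ∈ Ioo (0:ℝ) 1 ∧ (∀ t ω, 0 ≤ f t ω) ∧ MemH1 F T P f ∧
    (∀ t ω r, 0 ≤ φ t ω r) ∧
    (AEAE P T fun t ω => MonotoneOn (φ t ω) (Ici 0) ∧ φ t ω 0 = 0) ∧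
    (∀ r ≥ (0:ℝ), MemH F T P (fun t ω => φ t ω r)) ∧
    AEAE P T fun t ω => ∀ (y : ℝ) (z : Rd d),
      |g t ω y z| ≤ f t ω + φ t ω |y| + lam * ‖z‖ ^ α

/-- Assumption (HH). -/
def HH {d : ℕ} (F : Filtration ℝ m) (T : ℝ) (P : Measure Ω)
    (g : ℝ → Ω → ℝ → Rd d → ℝ) : Prop :=
  H2'i P T g ∧ HHii F T P g

/-- Assumption (AA): linear growth in `y` and sub-linear growth in `z`. -/
def AA {d : ℕ} (F : Filtration ℝ m) (T : ℝ) (P : Measure Ω)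
    (g : ℝ → Ω → ℝ → Rd d → ℝ) : Prop :=
  ∃ (μ lam α : ℝ) (f : ℝ → Ω → ℝ),
    0 ≤ μ ∧ 0 ≤ lam ∧ α ∈ Ioo (0:ℝ) 1 ∧ (∀ t ω, 0 ≤ f t ω) ∧ MemH1 F T P f ∧
    AEAE P T fun t ω => ∀ (y : ℝ) (z : Rd d),
      |g t ω y z| ≤ f t ω + μ * |y| + lam * ‖z‖ ^ α

/-- Assumption (H3)(i): barriers and terminal value, with `L ≤ U` and `L_T ≤ ξ ≤ U_T`. -/
def H3i (F : Filtration ℝ m) (T : ℝ) (P : Measure Ω)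
    (L U : ℝ → Ω → ℝ) (ξ : Ω → ℝ) : Prop :=
  MemS F T L ∧ MemS F T U ∧ (∀ᵐ ω ∂P, ∀ t ∈ Icc (0:ℝ) T, L t ω ≤ U t ω) ∧
  MemL1FT F T P ξ ∧ ∀ᵐ ω ∂P, L T ω ≤ ξ ω ∧ ξ ω ≤ U T ω

/-- Assumption (H3L)(i). -/
def H3Li (F : Filtration ℝ m) (T : ℝ) (P : Measure Ω)
    (L : ℝ → Ω → ℝ) (ξ : Ω → ℝ) : Prop :=
  MemS F T L ∧ MemL1FT F T P ξ ∧ ∀ᵐ ω ∂P, L T ω ≤ ξ ω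

/-- Assumption (H3U)(i). -/
def H3Ui (F : Filtration ℝ m) (T : ℝ) (P : Measure Ω)
    (U : ℝ → Ω → ℝ) (ξ : Ω → ℝ) : Prop :=
  MemS F T U ∧ MemL1FT F T P ξ ∧ ∀ᵐ ω ∂P, ξ ω ≤ U T ω

/-- Assumption (H3)(ii) (generalized Mokobodzki condition, two barriers):
there is a semimartingale `X = X_0 + ∫dC + ∫H·dB` of class (D) with
`g(·,X,0) ∈ H^1` and `L ≤ X ≤ U`. -/
def MokoBoth {d : ℕ} (F : Filtration ℝ m) (T : ℝ) (P : Measure Ω)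
    (SI : (ℝ → Ω → Rd d) → ℝ → Ω → ℝ) (g : ℝ → Ω → ℝ → Rd d → ℝ)
    (L U : ℝ → Ω → ℝ) : Prop :=
  ∃ (C : ℝ → Ω → ℝ) (Hp : ℝ → Ω → Rd d) (X : ℝ → Ω → ℝ),
    MemV1 F T P C ∧ (∀ β ∈ Ioo (0:ℝ) 1, MemMp F T P β Hp) ∧
    (∀ ω, ∀ t ∈ Icc (0:ℝ) T,
      X t ω = X 0 ω + (C t ω - C 0 ω) + (SI Hp t ω - SI Hp 0 ω)) ∧
    ClassD F T P X ∧ MemH1 F T P (fun t ω => g t ω (X t ω) 0) ∧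
    ∀ᵐ ω ∂P, ∀ t ∈ Icc (0:ℝ) T, L t ω ≤ X t ω ∧ X t ω ≤ U t ω

/-- Assumption (H3L)(ii) (generalized Mokobodzki condition, lower barrier). -/
def MokoLower {d : ℕ} (F : Filtration ℝ m) (T : ℝ) (P : Measure Ω)
    (SI : (ℝ → Ω → Rd d) → ℝ → Ω → ℝ) (g : ℝ → Ω → ℝ → Rd d → ℝ)
    (L : ℝ → Ω → ℝ) : Prop :=
  ∃ (C : ℝ → Ω → ℝ) (Hp : ℝ → Ω → Rd d) (X : ℝ → Ω → ℝ),
    MemV1 F T P C ∧ (∀ β ∈ Ioo (0:ℝ) 1, MemMp F T P β Hp) ∧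
    (∀ ω, ∀ t ∈ Icc (0:ℝ) T,
      X t ω = X 0 ω + (C t ω - C 0 ω) + (SI Hp t ω - SI Hp 0 ω)) ∧
    ClassD F T P X ∧ MemH1 F T P (fun t ω => g t ω (X t ω) 0) ∧
    ∀ᵐ ω ∂P, ∀ t ∈ Icc (0:ℝ) T, L t ω ≤ X t ω

/-- Assumption (H3U)(ii) (generalized Mokobodzki condition, upper barrier). -/
def MokoUpper {d : ℕ} (F : Filtration ℝ m) (T : ℝ) (P : Measure Ω)
    (SI : (ℝ → Ω → Rd d) → ℝ → Ω → ℝ) (g : ℝ → Ω → ℝ → Rd d → ℝ)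
    (U : ℝ → Ω → ℝ) : Prop :=
  ∃ (C : ℝ → Ω → ℝ) (Hp : ℝ → Ω → Rd d) (X : ℝ → Ω → ℝ),
    MemV1 F T P C ∧ (∀ β ∈ Ioo (0:ℝ) 1, MemMp F T P β Hp) ∧
    (∀ ω, ∀ t ∈ Icc (0:ℝ) T,
      X t ω = X 0 ω + (C t ω - C 0 ω) + (SI Hp t ω - SI Hp 0 ω)) ∧
    ClassD F T P X ∧ MemH1 F T P (fun t ω => g t ω (X t ω) 0) ∧
    ∀ᵐ ω ∂P, ∀ t ∈ Icc (0:ℝ) T, X t ω ≤ U t ω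

/-- An `L¹` solution of `BSDE(ξ, g + dV)`. -/
def IsBSDESol {d : ℕ} (F : Filtration ℝ m) (T : ℝ) (P : Measure Ω)
    (SI : (ℝ → Ω → Rd d) → ℝ → Ω → ℝ)
    (ξ : Ω → ℝ) (g : ℝ → Ω → ℝ → Rd d → ℝ) (V : ℝ → Ω → ℝ)
    (Y : ℝ → Ω → ℝ) (Z : ℝ → Ω → Rd d) : Prop :=
  (∀ β ∈ Ioo (0:ℝ) 1, MemSp F T P β Y ∧ MemMp F T P β Z) ∧
  ClassD F T P Y ∧
  ∀ᵐ ω ∂P, ∀ t ∈ Icc (0:ℝ) T,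
    Y t ω = ξ ω + (∫ s in Icc t T, g s ω (Y s ω) (Z s ω)) + (V T ω - V t ω)
      - (SI Z T ω - SI Z t ω)

/-- An `L¹` solution of the lower-reflected `RBSDE(ξ, g + dV, L)`. -/
def IsRBSDESolLower {d : ℕ} (F : Filtration ℝ m) (T : ℝ) (P : Measure Ω)
    (SI : (ℝ → Ω → Rd d) → ℝ → Ω → ℝ)
    (ξ : Ω → ℝ) (g : ℝ → Ω → ℝ → Rd d → ℝ) (V L : ℝ → Ω → ℝ)
    (Y : ℝ → Ω → ℝ) (Z : ℝ → Ω → Rd d) (K : ℝ → Ω → ℝ) : Prop :=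
  (∀ β ∈ Ioo (0:ℝ) 1, MemSp F T P β Y ∧ MemMp F T P β Z) ∧
  MemVplus1 F T P K ∧ ClassD F T P Y ∧
  (∀ᵐ ω ∂P, ∀ t ∈ Icc (0:ℝ) T,
    Y t ω = ξ ω + (∫ s in Icc t T, g s ω (Y s ω) (Z s ω)) + (V T ω - V t ω)
      + (K T ω - K t ω) - (SI Z T ω - SI Z t ω)) ∧
  (∀ᵐ ω ∂P, ∀ t ∈ Icc (0:ℝ) T, L t ω ≤ Y t ω) ∧
  ∀ᵐ ω ∂P, intdK T K (fun t ω' => Y t ω' - L t ω') ω = 0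

/-- An `L¹` solution of the upper-reflected `RBSDE(ξ, g + dV, U)`. -/
def IsRBSDESolUpper {d : ℕ} (F : Filtration ℝ m) (T : ℝ) (P : Measure Ω)
    (SI : (ℝ → Ω → Rd d) → ℝ → Ω → ℝ)
    (ξ : Ω → ℝ) (g : ℝ → Ω → ℝ → Rd d → ℝ) (V U : ℝ → Ω → ℝ)
    (Y : ℝ → Ω → ℝ) (Z : ℝ → Ω → Rd d) (A : ℝ → Ω → ℝ) : Prop :=
  (∀ β ∈ Ioo (0:ℝ) 1, MemSp F T P β Y ∧ MemMp F T P β Z) ∧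
  MemVplus1 F T P A ∧ ClassD F T P Y ∧
  (∀ᵐ ω ∂P, ∀ t ∈ Icc (0:ℝ) T,
    Y t ω = ξ ω + (∫ s in Icc t T, g s ω (Y s ω) (Z s ω)) + (V T ω - V t ω)
      - (A T ω - A t ω) - (SI Z T ω - SI Z t ω)) ∧
  (∀ᵐ ω ∂P, ∀ t ∈ Icc (0:ℝ) T, Y t ω ≤ U t ω) ∧
  ∀ᵐ ω ∂P, intdK T A (fun t ω' => U t ω' - Y t ω') ω = 0

/-- An `L¹` solution of the doubly reflected `DRBSDE(ξ, g + dV, L, U)`. -/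
def IsDRBSDESol {d : ℕ} (F : Filtration ℝ m) (T : ℝ) (P : Measure Ω)
    (SI : (ℝ → Ω → Rd d) → ℝ → Ω → ℝ)
    (ξ : Ω → ℝ) (g : ℝ → Ω → ℝ → Rd d → ℝ) (V L U : ℝ → Ω → ℝ)
    (Y : ℝ → Ω → ℝ) (Z : ℝ → Ω → Rd d) (K A : ℝ → Ω → ℝ) : Prop :=
  (∀ β ∈ Ioo (0:ℝ) 1, MemSp F T P β Y ∧ MemMp F T P β Z) ∧
  MemVplus1 F T P K ∧ MemVplus1 F T P A ∧ ClassD F T P Y ∧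
  (∀ᵐ ω ∂P, ∀ t ∈ Icc (0:ℝ) T,
    Y t ω = ξ ω + (∫ s in Icc t T, g s ω (Y s ω) (Z s ω)) + (V T ω - V t ω)
      + (K T ω - K t ω) - (A T ω - A t ω) - (SI Z T ω - SI Z t ω)) ∧
  (∀ᵐ ω ∂P, ∀ t ∈ Icc (0:ℝ) T, L t ω ≤ Y t ω ∧ Y t ω ≤ U t ω) ∧
  (∀ᵐ ω ∂P, intdK T K (fun t ω' => Y t ω' - L t ω') ω = 0) ∧
  (∀ᵐ ω ∂P, intdK T A (fun t ω' => U t ω' - Y t ω') ω = 0) ∧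
  MutSingular F T P K A

/-- The lower penalized generator `g(t,y,z) + n (y - L_t)^-`. -/
def penalLower {d : ℕ} (g : ℝ → Ω → ℝ → Rd d → ℝ) (L : ℝ → Ω → ℝ) (n : ℕ) :
    ℝ → Ω → ℝ → Rd d → ℝ :=
  fun t ω y z => g t ω y z + (n : ℝ) * max (L t ω - y) 0

/-- The upper penalized generator `g(t,y,z) - n (y - U_t)^+`. -/
def penalUpper {d : ℕ} (g : ℝ → Ω → ℝ → Rd d → ℝ) (U : ℝ → Ω → ℝ) (n : ℕ) :
    ℝ → Ω → ℝ → Rd d → ℝ :=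
  fun t ω y z => g t ω y z - (n : ℝ) * max (y - U t ω) 0

/-- The doubly penalized generator `g(t,y,z) + n (y - L_t)^- - n (y - U_t)^+`. -/
def penalBoth {d : ℕ} (g : ℝ → Ω → ℝ → Rd d → ℝ) (L U : ℝ → Ω → ℝ) (n : ℕ) :
    ℝ → Ω → ℝ → Rd d → ℝ :=
  fun t ω y z => g t ω y z + (n : ℝ) * max (L t ω - y) 0 - (n : ℝ) * max (y - U t ω) 0

/-- Locally uniform convergence in `(y,z)` of a sequence of generators, `dP×dt`-a.e. -/
def LocUnifConv {d : ℕ} (P : Measure Ω) (T : ℝ)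
    (gn : ℕ → ℝ → Ω → ℝ → Rd d → ℝ) (g : ℝ → Ω → ℝ → Rd d → ℝ) : Prop :=
  AEAE P T fun t ω => ∀ R > (0:ℝ),
    Tendsto (fun n => ⨆ p : {p : ℝ × Rd d // |p.1| ≤ R ∧ ‖p.2‖ ≤ R},
      |gn n t ω p.1.1 p.1.2 - g t ω p.1.1 p.1.2|) atTop (𝓝 0)

/-- Minimal `L¹` solution of a BSDE. -/
def IsMinimalBSDESol {d : ℕ} (F : Filtration ℝ m) (T : ℝ) (P : Measure Ω)
    (SI : (ℝ → Ω → Rd d) → ℝ → Ω → ℝ)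
    (ξ : Ω → ℝ) (g : ℝ → Ω → ℝ → Rd d → ℝ) (V : ℝ → Ω → ℝ)
    (Y : ℝ → Ω → ℝ) (Z : ℝ → Ω → Rd d) : Prop :=
  IsBSDESol F T P SI ξ g V Y Z ∧
  ∀ Y' Z', IsBSDESol F T P SI ξ g V Y' Z' →
    ∀ᵐ ω ∂P, ∀ t ∈ Icc (0:ℝ) T, Y t ω ≤ Y' t ω

/-- Maximal `L¹` solution of a BSDE. -/
def IsMaximalBSDESol {d : ℕ} (F : Filtration ℝ m) (T : ℝ) (P : Measure Ω)
    (SI : (ℝ → Ω → Rd d) → ℝ → Ω → ℝ)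
    (ξ : Ω → ℝ) (g : ℝ → Ω → ℝ → Rd d → ℝ) (V : ℝ → Ω → ℝ)
    (Y : ℝ → Ω → ℝ) (Z : ℝ → Ω → Rd d) : Prop :=
  IsBSDESol F T P SI ξ g V Y Z ∧
  ∀ Y' Z', IsBSDESol F T P SI ξ g V Y' Z' →
    ∀ᵐ ω ∂P, ∀ t ∈ Icc (0:ℝ) T, Y' t ω ≤ Y t ω

lemma sub_le_of_mul_sign_sub_le {h ρ : ℝ → ℝ} {x y : ℝ} (hρ0 : 0 ≤ ρ 0) (hxy : x ≤ y)
    (hh : (h y - h x) * Real.sign (y - x) ≤ ρ |y - x|) : h y - h x ≤ ρ (y - x) := by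
  rcases hxy.eq_or_lt with rfl | hlt
  · simpa using hρ0
  · rwa [Real.sign_of_pos (sub_pos.2 hlt), mul_one, abs_of_pos (sub_pos.2 hlt)] at hh

lemma abs_le_abs_add_abs_of_mem_Icc {a b y : ℝ} (hay : a ≤ y) (hyb : y ≤ b) :
    |y| ≤ |a| + |b| :=
  (abs_le_max_abs_abs hay hyb).trans (max_le_add_of_nonneg (abs_nonneg a) (abs_nonneg b))

/-- On `[a, b]` a one-sided Osgood condition bounds `h` from above through `h a` and from
below through `h b`. -/
lemma abs_le_of_mem_Icc_of_oneSidedOsgood {h ρ : ℝ → ℝ} {A a b y : ℝ} (hρ0 : 0 ≤ ρ 0)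
    (hρlin : ∀ x ≥ (0:ℝ), ρ x ≤ A * (x + 1))
    (hh : ∀ y₁ y₂, (h y₁ - h y₂) * Real.sign (y₁ - y₂) ≤ ρ |y₁ - y₂|)
    (hay : a ≤ y) (hyb : y ≤ b) :
    |h y| ≤ |h a| + |h b| + A * (|a| + |b|) + A := by
  have hA : 0 ≤ A := by simpa using hρ0.trans (hρlin 0 le_rfl)
  have hupper : h y - h a ≤ A * (y - a + 1) :=
    (sub_le_of_mul_sign_sub_le hρ0 hay (hh y a)).trans (hρlin _ (sub_nonneg.2 hay))
  have hlower : h b - h y ≤ A * (b - y + 1) :=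
    (sub_le_of_mul_sign_sub_le hρ0 hyb (hh b y)).trans (hρlin _ (sub_nonneg.2 hyb))
  have hya : A * (y - a) ≤ A * (|a| + |b|) :=
    mul_le_mul_of_nonneg_left (by linarith [neg_abs_le a, le_abs_self b]) hA
  have hby : A * (b - y) ≤ A * (|a| + |b|) :=
    mul_le_mul_of_nonneg_left (by linarith [neg_abs_le a, le_abs_self b]) hA
  rw [abs_le]
  constructor <;> linarith [le_abs_self (h a), neg_abs_le (h a), le_abs_self (h b),
    neg_abs_le (h b), abs_nonneg (h a), abs_nonneg (h b)]

lemma rpow_add_le_one_add_add_rpow {a b α : ℝ} (ha : 0 ≤ a) (hb : 0 ≤ b) (hα0 : 0 ≤ α)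
    (hα1 : α ≤ 1) : (a + b) ^ α ≤ 1 + a + b ^ α := by
  have hpow_a : a ^ α ≤ 1 + a := by
    rcases le_total a 1 with ha1 | ha1
    · linarith [Real.rpow_le_one ha ha1 hα0]
    · linarith [Real.rpow_le_self_of_one_le ha1 hα1]
  linarith [Real.rpow_add_le_add_rpow ha hb hα0 hα1]

lemma abs_le_abs_add_of_abs_sub_le {u v c : ℝ} (h : |u - v| ≤ c) : |u| ≤ |v| + c := by
  linarith [abs_sub_abs_le_abs_sub u v]

theorem statement0_general {Ω : Type*} {m : MeasurableSpace Ω}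
    (F : Filtration ℝ m) (P : Measure Ω)
    (T : ℝ) (d : ℕ)
    (g : ℝ → Ω → ℝ → Rd d → ℝ)
    (ρ : ℝ → ℝ) (A : ℝ)
    (hH1i : H1i_with P T g ρ) (hρlin : ∀ x ≥ (0:ℝ), ρ x ≤ A * (x + 1))
    (Xlo Y Xhi : ℝ → Ω → ℝ) (Z : ℝ → Ω → Rd d)
    (hord : ∀ᵐ ω ∂P, ∀ t ∈ Icc (0:ℝ) T, Xlo t ω ≤ Y t ω ∧ Y t ω ≤ Xhi t ω) :
    (∀ (μ lam α : ℝ) (f : ℝ → Ω → ℝ), H2'ii_with F T P g μ lam α f →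
      AEAE P T fun t ω =>
        |g t ω (Y t ω) (Z t ω)| ≤
          |g t ω (Xlo t ω) 0| + |g t ω (Xhi t ω) 0|
            + (μ + A) * (|Xlo t ω| + |Xhi t ω|) + f t ω + A + lam * ‖Z t ω‖ ^ α) ∧
    (∀ (γ α : ℝ) (f : ℝ → Ω → ℝ), H2ii_with F T P g γ α f →
      AEAE P T fun t ω =>
        |g t ω (Y t ω) (Z t ω)| ≤
          |g t ω (Xlo t ω) 0| + |g t ω (Xhi t ω) 0|
            + (γ + A) * (|Xlo t ω| + |Xhi t ω|) + γ * (1 + f t ω) + A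
            + γ * ‖Z t ω‖ ^ α) := by
  obtain ⟨⟨-, -, hρ0, -, -⟩, hosg⟩ := hH1i
  have hsandwich : AEAE P T fun t ω =>
      |g t ω (Y t ω) 0| ≤ |g t ω (Xlo t ω) 0| + |g t ω (Xhi t ω) 0|
        + A * (|Xlo t ω| + |Xhi t ω|) + A ∧ |Y t ω| ≤ |Xlo t ω| + |Xhi t ω| := by
    filter_upwards [hosg, hord] with ω hosgω hordω
    filter_upwards [hosgω, ae_restrict_mem measurableSet_Icc] with t hosgt ht
    obtain ⟨hlo, hhi⟩ := hordω t ht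
    exact ⟨abs_le_of_mem_Icc_of_oneSidedOsgood hρ0.ge hρlin (hosgt · · 0) hlo hhi,
      abs_le_abs_add_abs_of_mem_Icc hlo hhi⟩
  constructor
  · rintro μ lam α f ⟨hμ, -, -, -, -, hgrow⟩
    filter_upwards [hsandwich, hgrow] with ω hsandwichω hgrowω
    filter_upwards [hsandwichω, hgrowω] with t ⟨hg0, hY⟩ hgrowt
    linarith [abs_le_abs_add_of_abs_sub_le (hgrowt (Y t ω) (Z t ω)),
      mul_le_mul_of_nonneg_left hY hμ]
  · rintro γ α f ⟨hγ, hα, hf0, -, hgrow⟩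
    filter_upwards [hsandwich, hgrow] with ω hsandwichω hgrowω
    filter_upwards [hsandwichω, hgrowω] with t ⟨hg0, hY⟩ hgrowt
    have hrpow := rpow_add_le_one_add_add_rpow (add_nonneg (hf0 t ω) (abs_nonneg (Y t ω)))
      (norm_nonneg (Z t ω)) hα.1.le hα.2.le
    linarith [abs_le_abs_add_of_abs_sub_le (hgrowt (Y t ω) (Z t ω)),
      mul_le_mul_of_nonneg_left hrpow hγ, mul_le_mul_of_nonneg_left hY hγ]

/-- Lemma 2.2: under (H1)(i) with a linear-growth Osgood function `ρ`
(`ρ(x) ≤ A(x+1)`, `A > 0`) and (H2')(ii) (resp. (H2)(ii)), any process `Y` sandwiched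
between `X̲` and `X̄` satisfies the stated `dP×dt`-a.e. bound on `|g(t, Y_t, Z_t)|`. -/
theorem statement0 {Ω : Type*} {m : MeasurableSpace Ω}
    (F : Filtration ℝ m) (P : Measure Ω) [IsProbabilityMeasure P]
    (T : ℝ) (hT : 0 < T) (d : ℕ)
    (g : ℝ → Ω → ℝ → Rd d → ℝ) (hg : IsGenerator F T P g)
    (ρ : ℝ → ℝ) (A : ℝ) (hA : 0 < A)
    (hH1i : H1i_with P T g ρ) (hρlin : ∀ x ≥ (0:ℝ), ρ x ≤ A * (x + 1))
    (Xlo Y Xhi : ℝ → Ω → ℝ) (Z : ℝ → Ω → Rd d)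
    (hXlo : MemS F T Xlo) (hY : MemS F T Y) (hXhi : MemS F T Xhi)
    (hZ : MemM F T P Z)
    (hord : ∀ᵐ ω ∂P, ∀ t ∈ Icc (0:ℝ) T, Xlo t ω ≤ Y t ω ∧ Y t ω ≤ Xhi t ω) :
    (∀ (μ lam α : ℝ) (f : ℝ → Ω → ℝ), H2'ii_with F T P g μ lam α f →
      AEAE P T fun t ω =>
        |g t ω (Y t ω) (Z t ω)| ≤
          |g t ω (Xlo t ω) 0| + |g t ω (Xhi t ω) 0|
            + (μ + A) * (|Xlo t ω| + |Xhi t ω|) + f t ω + A + lam * ‖Z t ω‖ ^ α) ∧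
    (∀ (γ α : ℝ) (f : ℝ → Ω → ℝ), H2ii_with F T P g γ α f →
      AEAE P T fun t ω =>
        |g t ω (Y t ω) (Z t ω)| ≤
          |g t ω (Xlo t ω) 0| + |g t ω (Xhi t ω) 0|
            + (γ + A) * (|Xlo t ω| + |Xhi t ω|) + γ * (1 + f t ω) + A
            + γ * ‖Z t ω‖ ^ α) :=
  statement0_general F P T d g ρ A hH1i hρlin Xlo Y Xhi Z hord

end L1BSDE

end
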